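/- Let λ^{(1)}, σ^{(1)}, λ^{(2)}, σ^{(2)} be positive integers with gcd(λ^{(k)}, σ^{(k)}) = 1 and 0 < σ^{(k)} ≤ λ^{(k)} for k = 1, 2, and let s be a positive rational number. Then there exists at most one sequence of positive integers n_0, n_1, ..., n_l (l ≥ 1) satisfying: (i) n_0 = λ^{(1)} and n_l = λ^{(2)}; (ii) n_1 ≡ σ^{(1)} (mod λ^{(1)}) and n_{l-1} ≡ σ^{(2)} (mod λ^{(2)}); (iii) n_{i-1} + n_{i+1} ≡ 0 (mod n_i) for i = 1, ..., l-1; (iv) (n_{i-1} + n_{i+1})/n_i ≥ 2 for i = 1, ..., l-1; and (v) the sum over i = 0, ..., l-1 of 1/(n_i n_{i+1}) equals s. -/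

import Mathlib

lemma qstep (x y z b0 b1 : ℚ) (hx : x ≠ 0) (hy : y ≠ 0) (hz : z ≠ 0)
    (h : b0 * y - b1 * x = z) : 1/(x*y) + b1/(y*z) = b0/(x*z) := by
  subst h
  field_simp
  have hz' : -(x * b1) + y * b0 ≠ 0 := by contrapose! hz; linarith
  linear_combination -(mul_inv_cancel₀ hz')

lemma tailB (n : ℕ → ℕ) (l : ℕ) (hpos : ∀ i ≤ l, 0 < n i)
    (hiii : ∀ i, 1 ≤ i → i ≤ l - 1 → n i ∣ n (i - 1) + n (i + 1))
    (hiv : ∀ i, 1 ≤ i → i ≤ l - 1 → 2 * n i ≤ n (i - 1) + n (i + 1)) :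
    ∀ j, 1 ≤ j → ∀ k, k + j = l →
    ∃ b0 b1 : ℤ,
      (∑ i ∈ Finset.Ico k l, (1:ℚ)/(n i * n (i+1))) = b0 / (n k * n l) ∧
      b0 * n (k+1) - b1 * n k = n l ∧
      (j:ℤ) - 1 ≤ b1 ∧ b1 + 1 ≤ b0 ∧ (j = 1 → b0 = 1) := by
  intro j
  induction j with
  | zero => omega
  | succ j ih =>
    intro _ k hk
    rcases Nat.eq_zero_or_pos j with hj0 | hj1
    · -- base case j+1 = 1, k = l-1
      subst hj0
      have hk1 : k + 1 = l := by omega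
      refine ⟨1, 0, ?_, ?_, by norm_num, by norm_num, fun _ => rfl⟩
      · have : Finset.Ico k l = {k} := by
          rw [← hk1, Finset.Ico_add_one_right_eq_Icc, Finset.Icc_self]
        rw [this, Finset.sum_singleton, hk1]
        norm_num
      · rw [hk1]; ring
    · -- step
      obtain ⟨b1, b2, hP, hQ, hR1, hR2, _⟩ := ih (by omega) (k+1) (by omega)
      obtain ⟨c, hc⟩ := hiii (k+1) (by omega) (by omega)
      have hcge : 2 ≤ c := by
        have h2 := hiv (k+1) (by omega) (by omega)
        simp only [Nat.add_sub_cancel] at hc h2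
        have hnk1 : 0 < n (k+1) := hpos (k+1) (by omega)
        nlinarith
      have hcZ : (n k : ℤ) + n (k+2) = n (k+1) * c := by
        have := hc; simp only [Nat.add_sub_cancel] at this
        exact_mod_cast this
      have hdet : ((c:ℤ) * b1 - b2) * n (k+1) - b1 * n k = n l := by
        linear_combination hQ - b1 * hcZ
      refine ⟨(c:ℤ) * b1 - b2, b1, ?_, hdet, by push_cast; omega, ?_, by omega⟩
      · -- sum identity
        have hsplit : ∑ i ∈ Finset.Ico k l, (1:ℚ)/(n i * n (i+1))
            = (1:ℚ)/(n k * n (k+1)) + ∑ i ∈ Finset.Ico (k+1) l, (1:ℚ)/(n i * n (i+1)) :=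
          Finset.sum_eq_sum_Ico_succ_bot (by omega) _
        have h0 : (n k : ℚ) ≠ 0 := by
          exact_mod_cast (hpos k (by omega)).ne'
        have h1 : (n (k+1) : ℚ) ≠ 0 := by
          exact_mod_cast (hpos (k+1) (by omega)).ne'
        have h2 : (n l : ℚ) ≠ 0 := by
          exact_mod_cast (hpos l le_rfl).ne'
        have hdetQ : (((c:ℤ) * b1 - b2 : ℤ) : ℚ) * n (k+1) - ((b1:ℤ):ℚ) * n k = n l := by
          exact_mod_cast hdet
        rw [hsplit, hP]
        exact qstep _ _ _ _ _ h0 h1 h2 hdetQ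
      · -- b1 + 1 ≤ c*b1 - b2
        have hcZ2 : (2:ℤ) ≤ (c:ℤ) := by exact_mod_cast hcge
        have hjZ : (1:ℤ) ≤ (j:ℤ) := by exact_mod_cast hj1
        nlinarith [mul_nonneg (by linarith : (0:ℤ) ≤ (c:ℤ) - 2) (by linarith : (0:ℤ) ≤ b1)]

lemma auxUnique : ∀ l : ℕ, ∀ l' : ℕ, ∀ n n' : ℕ → ℕ, 1 ≤ l → 1 ≤ l' →
    (∀ i ≤ l, 0 < n i) → (∀ i ≤ l', 0 < n' i) →
    n 0 = n' 0 → n l = n' l' → n 1 % n 0 = n' 1 % n' 0 →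
    (∀ i, 1 ≤ i → i ≤ l - 1 → n i ∣ n (i - 1) + n (i + 1)) →
    (∀ i, 1 ≤ i → i ≤ l' - 1 → n' i ∣ n' (i - 1) + n' (i + 1)) →
    (∀ i, 1 ≤ i → i ≤ l - 1 → 2 * n i ≤ n (i - 1) + n (i + 1)) →
    (∀ i, 1 ≤ i → i ≤ l' - 1 → 2 * n' i ≤ n' (i - 1) + n' (i + 1)) →
    (∑ i ∈ Finset.range l, (1:ℚ)/(n i * n (i+1))
      = ∑ i ∈ Finset.range l', (1:ℚ)/(n' i * n' (i+1))) →
    l = l' ∧ ∀ i ≤ l, n i = n' i := by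
  intro l
  induction l using Nat.strong_induction_on with
  | _ l IH =>
  intro l' n n' hl hl' hpos hpos' h00 hll hmod hiii hiii' hiv hiv' hsum
  obtain ⟨b0, b1, hP, hQ, hR1, hR2, hE⟩ :=
    tailB n l hpos hiii hiv l hl 0 (by omega)
  obtain ⟨b0', b1', hP', hQ', hR1', hR2', hE'⟩ :=
    tailB n' l' hpos' hiii' hiv' l' hl' 0 (by omega)
  have h0q : (n 0 : ℚ) ≠ 0 := by exact_mod_cast (hpos 0 (by omega)).ne'
  have hlq : (n l : ℚ) ≠ 0 := by exact_mod_cast (hpos l le_rfl).ne'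
  have hA : b0 = b0' := by
    rw [Finset.range_eq_Ico, Finset.range_eq_Ico] at hsum
    rw [hsum, hP'] at hP
    rw [← h00, ← hll] at hP
    have h : b0' = b0 := by
      field_simp at hP
      exact_mod_cast hP
    exact h.symm
  -- l = 1 ↔ b0 = 1 ↔ l' = 1
  have hlb : (l : ℤ) ≤ b0 := by linarith
  have hlb' : (l' : ℤ) ≤ b0' := by linarith
  rcases Nat.eq_or_lt_of_le hl with h1 | h2
  · -- l = 1
    have hb01 : b0 = 1 := hE h1.symm
    have : l' = 1 := by
      have hle : (l' : ℤ) ≤ 1 := by rw [← hA, hb01] at hlb'; exact hlb'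
      have : l' ≤ 1 := by exact_mod_cast hle
      omega
    subst this
    have h1' : l = 1 := h1.symm
    subst h1'
    refine ⟨rfl, fun i hi => ?_⟩
    match i, hi with
    | 0, _ => exact h00
    | 1, _ => exact hll
  · rcases Nat.eq_or_lt_of_le hl' with h1' | h2'
    · -- l' = 1, l ≥ 2 : contradiction
      have hb01 : b0' = 1 := hE' h1'.symm
      exfalso
      have hle : (l : ℤ) ≤ 1 := by rw [hA, hb01] at hlb; exact hlb
      have : l ≤ 1 := by exact_mod_cast hle
      omega
    · -- l ≥ 2, l' ≥ 2
      have hl2 : 2 ≤ l := h2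
      have hl2' : 2 ≤ l' := h2'
      -- show n 1 = n' 1
      have hdvd : (n 0 : ℤ) ∣ (n 1 : ℤ) - (n' 1 : ℤ) := by
        have : n' 1 ≡ n 1 [MOD n 0] := by
          rw [Nat.ModEq]; rw [← h00] at hmod; exact hmod.symm
        exact this.dvd
      obtain ⟨t, ht⟩ := hdvd
      have h0pos : (0:ℤ) < n 0 := by exact_mod_cast hpos 0 (by omega)
      have hbt : b1 - b1' = b0 * t := by
        have h1 : b0 * (n 1 : ℤ) - b1 * n 0 = n l := hQ
        have h2 : b0 * (n' 1 : ℤ) - b1' * n 0 = n l := by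
          rw [hA, h00, hll]; exact hQ'
        have : (n 0 : ℤ) * (b1 - b1') = n 0 * (b0 * t) := by
          linear_combination h2 - h1 + b0 * ht
        exact mul_left_cancel₀ h0pos.ne' this
      have ht0 : t = 0 := by
        have hb1a : 1 ≤ b1 := by
          have : (2:ℤ) ≤ l := by exact_mod_cast hl2
          linarith
        have hb1a' : 1 ≤ b1' := by
          have : (2:ℤ) ≤ l' := by exact_mod_cast hl2'
          linarith
        have hb0pos : 0 < b0 := by linarith
        by_contra ht0
        have habs1 : 1 ≤ |t| := Int.one_le_abs ht0
        have habs : b0 ≤ |b1 - b1'| := by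
          rw [hbt, abs_mul, abs_of_pos hb0pos]
          nlinarith [abs_nonneg t]
        have : |b1 - b1'| ≤ b0 - 2 := by
          rw [abs_le]; constructor <;> omega
        linarith
      have hn1 : n 1 = n' 1 := by
        have : (n 1 : ℤ) = n' 1 := by rw [ht0, mul_zero] at ht; omega
        exact_mod_cast this
      -- recurse on shifted sequences
      have hkey := IH (l - 1) (by omega) (l' - 1) (fun i => n (i+1)) (fun i => n' (i+1))
        (by omega) (by omega)
        (fun i hi => hpos (i+1) (by omega)) (fun i hi => hpos' (i+1) (by omega))
        hn1
        (by simpa [Nat.sub_add_cancel hl, Nat.sub_add_cancel hl'] using hll)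
        ?_ ?_ ?_ ?_ ?_ ?_
      · obtain ⟨hleq, hvals⟩ := hkey
        constructor
        · omega
        · intro i hi
          match i with
          | 0 => exact h00
          | (j+1) => exact hvals j (by omega)
      · -- mod condition for shifted: n 2 % n 1 = n' 2 % n' 1
        have d1 : n 1 ∣ n 0 + n 2 := hiii 1 le_rfl (by omega)
        have d1' : n' 1 ∣ n' 0 + n' 2 := hiii' 1 le_rfl (by omega)
        rw [← hn1, ← h00] at d1'
        have : n 2 ≡ n' 2 [MOD n 1] := by
          have e1 : n 0 + n 2 ≡ 0 [MOD n 1] := (Nat.modEq_zero_iff_dvd).mpr d1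
          have e2 : n 0 + n' 2 ≡ 0 [MOD n 1] := (Nat.modEq_zero_iff_dvd).mpr d1'
          exact Nat.ModEq.add_left_cancel' (n 0) (e1.trans e2.symm)
        show n 2 % n 1 = n' 2 % n' 1
        rw [← hn1]
        exact this
      · intro i hi1 hi2
        have : i - 1 + 1 = i := by omega
        simpa [this] using hiii (i+1) (by omega) (by omega)
      · intro i hi1 hi2
        have : i - 1 + 1 = i := by omega
        simpa [this] using hiii' (i+1) (by omega) (by omega)
      · intro i hi1 hi2
        have : i - 1 + 1 = i := by omega
        simpa [this] using hiv (i+1) (by omega) (by omega)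
      · intro i hi1 hi2
        have : i - 1 + 1 = i := by omega
        simpa [this] using hiv' (i+1) (by omega) (by omega)
      · -- sum equality for shifted
        have hpeel : ∀ (m : ℕ) (f : ℕ → ℚ), 1 ≤ m →
            ∑ i ∈ Finset.range m, f i = (∑ i ∈ Finset.range (m-1), f (i+1)) + f 0 := by
          intro m f hm
          rw [show m = (m-1)+1 by omega]
          simpa using Finset.sum_range_succ' f (m-1)
        rw [hpeel l _ hl, hpeel l' _ hl'] at hsum
        have hfirst : (1:ℚ)/(n 0 * n 1) = 1/(n' 0 * n' 1) := by rw [h00, hn1]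
        rw [hfirst] at hsum
        exact add_right_cancel hsum


/-- Uniqueness in the Lemma of §3 (non-amphidrome case): given boundary data
`(lam₁, sig₁)`, `(lam₂, sig₂)` and a positive rational screw number `s`, there
is at most one sequence `n 0, ..., n l` of positive integers satisfying
conditions (i)–(v). -/
theorem stmt_4 (lam₁ sig₁ lam₂ sig₂ : ℕ)
    (h₁ : 0 < sig₁ ∧ sig₁ ≤ lam₁ ∧ Nat.gcd lam₁ sig₁ = 1)
    (h₂ : 0 < sig₂ ∧ sig₂ ≤ lam₂ ∧ Nat.gcd lam₂ sig₂ = 1)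
    (s : ℚ) (hs : 0 < s)
    (l l' : ℕ) (n n' : ℕ → ℕ)
    (hl : 1 ≤ l) (hl' : 1 ≤ l')
    (hpos : ∀ i ≤ l, 0 < n i) (hpos' : ∀ i ≤ l', 0 < n' i)
    (hi : n 0 = lam₁ ∧ n l = lam₂) (hi' : n' 0 = lam₁ ∧ n' l' = lam₂)
    (hii : n 1 % lam₁ = sig₁ % lam₁ ∧ n (l - 1) % lam₂ = sig₂ % lam₂)
    (hii' : n' 1 % lam₁ = sig₁ % lam₁ ∧ n' (l' - 1) % lam₂ = sig₂ % lam₂)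
    (hiii : ∀ i, 1 ≤ i → i ≤ l - 1 → n i ∣ n (i - 1) + n (i + 1))
    (hiii' : ∀ i, 1 ≤ i → i ≤ l' - 1 → n' i ∣ n' (i - 1) + n' (i + 1))
    (hiv : ∀ i, 1 ≤ i → i ≤ l - 1 → 2 * n i ≤ n (i - 1) + n (i + 1))
    (hiv' : ∀ i, 1 ≤ i → i ≤ l' - 1 → 2 * n' i ≤ n' (i - 1) + n' (i + 1))
    (hv : ∑ i ∈ Finset.range l, (1 : ℚ) / (n i * n (i + 1)) = s)
    (hv' : ∑ i ∈ Finset.range l', (1 : ℚ) / (n' i * n' (i + 1)) = s) :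
    l = l' ∧ ∀ i ≤ l, n i = n' i := by
  exact auxUnique l l' n n' hl hl' hpos hpos'
    (hi.1.trans hi'.1.symm) (hi.2.trans hi'.2.symm)
    (by rw [hi.1, hi'.1, hii.1, hii'.1])
    hiii hiii' hiv hiv' (hv.trans hv'.symm)
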